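/- The map replacing some peaks (factors 'ud') of a Dyck path by horizontal steps gives a bijection between Schröder paths of semilength n with k horizontal steps and pairs (Dyck path of semilength n, choice of k peaks of that path). -/

import Mathlib

inductive SStep : Type
  | U : SStep
  | D : SStep
  | H : SStep
deriving DecidableEq

def SStep.hdiff : SStep → ℤ
  | .U => 1
  | .D => -1
  | .H => 0

def SStep.hlen : SStep → ℕ
  | .U => 1
  | .D => 1
  | .H => 2

/-- A Schröder path of semilength `n`. -/
def IsSchroeder (n : ℕ) (p : List SStep) : Prop :=
  (p.map SStep.hlen).sum = 2 * n ∧ (p.map SStep.hdiff).sum = 0 ∧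
    ∀ q : List SStep, q <+: p → 0 ≤ (q.map SStep.hdiff).sum

/-- The set of peak positions of a path: indices `i` with `pᵢ = u`, `pᵢ₊₁ = d`. -/
def peaks (p : List SStep) : Finset ℕ :=
  (Finset.range p.length).filter
    (fun i => p.getD i SStep.D = SStep.U ∧ p.getD (i + 1) SStep.U = SStep.D)


/-!
Expanding every `h` of a Schröder path into `ud` gives a Dyck path (the only new prefix heights are
one above the height before an `h`), and the positions of the expanded `h`'s are peaks of it.
Conversely, a Dyck path with a set `S` of its peaks is read off letter by letter: a marked peak `ud`
at the front contracts to `h`, any other front letter is kept, and `S` is shifted down by the length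
consumed.
-/

namespace SStep

def toDyck : SStep → List SStep
  | .U => [.U]
  | .D => [.D]
  | .H => [.U, .D]

@[simp]
lemma length_toDyck (s : SStep) : s.toDyck.length = s.hlen := by
  cases s <;> rfl

lemma sum_map_toDyck {M : Type*} [AddMonoid M] (f : SStep → M) (hf : f .H = f .U + f .D)
    (s : SStep) : (s.toDyck.map f).sum = f s := by
  cases s <;> simp [toDyck, hf]

end SStep

open SStep

def expand (p : List SStep) : List SStep :=
  p.flatMap SStep.toDyck

@[simp]
lemma expand_nil : expand [] = [] := rfl

@[simp]
lemma expand_cons (s : SStep) (t : List SStep) : expand (s :: t) = s.toDyck ++ expand t :=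
  List.flatMap_cons

lemma sum_map_expand {M : Type*} [AddMonoid M] (f : SStep → M) (hf : f .H = f .U + f .D)
    (p : List SStep) : ((expand p).map f).sum = (p.map f).sum := by
  induction p with
  | nil => rfl
  | cons s t ih => simp [sum_map_toDyck f hf, ih]

lemma H_notMem_expand (p : List SStep) : .H ∉ expand p := by
  simp only [expand, List.mem_flatMap, not_exists, not_and]
  intro s _
  cases s <;> simp [toDyck]

lemma exists_prefix_sum_hdiff_le {p r : List SStep} (hr : r <+: expand p) :
    ∃ q, q <+: p ∧ (q.map hdiff).sum ≤ (r.map hdiff).sum := by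
  induction p generalizing r with
  | nil => exact ⟨[], List.prefix_refl _, by simp [List.prefix_nil.mp hr]⟩
  | cons s t ih =>
    have extend : ∀ r', r' <+: expand t →
        ∃ q, q <+: s :: t ∧ (q.map hdiff).sum ≤ ((s.toDyck ++ r').map hdiff).sum := by
      intro r' hr'
      obtain ⟨q, hq, hle⟩ := ih hr'
      exact ⟨s :: q, List.cons_prefix_cons.mpr ⟨rfl, hq⟩, by simp [sum_map_toDyck hdiff rfl, hle]⟩
    cases s <;>
      simp only [expand_cons, toDyck, List.cons_append, List.nil_append, List.prefix_cons_iff]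
        at hr
    all_goals
      rcases hr with rfl | ⟨r, rfl, hr⟩
      · exact ⟨[], List.nil_prefix, by simp⟩
    case H.inr =>
      rcases hr with rfl | ⟨r, rfl, hr⟩
      · exact ⟨[], List.nil_prefix, by simp [hdiff]⟩
      · exact extend r hr
    all_goals exact extend r hr

lemma isSchroeder_expand_iff {n : ℕ} {p : List SStep} :
    IsSchroeder n (expand p) ↔ IsSchroeder n p := by
  have hlen_sum := sum_map_expand hlen rfl
  have hdiff_sum := sum_map_expand hdiff rfl
  simp only [IsSchroeder, hlen_sum, hdiff_sum, and_congr_right_iff]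
  refine fun _ _ => ⟨fun h q hq => ?_, fun h r hr => ?_⟩
  · rw [← hdiff_sum]
    exact h _ (hq.flatMap toDyck)
  · obtain ⟨q, hq, hle⟩ := exists_prefix_sum_hdiff_le hr
    exact (h q hq).trans hle

lemma mem_peaks_cons {s : SStep} {l : List SStep} {i : ℕ} :
    i + 1 ∈ peaks (s :: l) ↔ i ∈ peaks l := by
  simp [peaks]

lemma add_length_mem_peaks_append {w l : List SStep} {i : ℕ} :
    i + w.length ∈ peaks (w ++ l) ↔ i ∈ peaks l := by
  induction w with
  | nil => simp
  | cons s w ih => rw [List.length_cons, ← add_assoc, List.cons_append, mem_peaks_cons, ih]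

lemma zero_mem_peaks_iff {l : List SStep} : 0 ∈ peaks l ↔ ∃ t, l = .U :: .D :: t := by
  rcases l with _ | ⟨a, _ | ⟨b, t⟩⟩
  · simp [peaks]
  · cases a <;> simp [peaks]
  · cases a <;> cases b <;> simp [peaks]

lemma one_notMem_peaks (t : List SStep) : 1 ∉ peaks (.U :: .D :: t) := by
  simp [peaks]

/-- The positions in `expand p` of the `u` steps coming from `h` steps of `p`. -/
def marks : List SStep → Finset ℕ
  | [] => ∅
  | s :: t => (if s = .H then {0} else ∅) ∪ (marks t).image (· + s.hlen)

lemma mem_marks_cons {s : SStep} {t : List SStep} {i : ℕ} :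
    i ∈ marks (s :: t) ↔ s = .H ∧ i = 0 ∨ ∃ j ∈ marks t, j + s.hlen = i := by
  by_cases hs : s = .H <;> simp [marks, hs]

lemma add_hlen_mem_marks_cons {s : SStep} {t : List SStep} {i : ℕ} :
    i + s.hlen ∈ marks (s :: t) ↔ i ∈ marks t := by
  cases s <;> simp [mem_marks_cons, hlen]

lemma zero_mem_marks_cons {s : SStep} {t : List SStep} : 0 ∈ marks (s :: t) ↔ s = .H := by
  cases s <;> simp [mem_marks_cons, hlen]

lemma marks_subset_peaks (p : List SStep) : marks p ⊆ peaks (expand p) := by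
  induction p with
  | nil => simp [marks]
  | cons s t ih =>
    intro i hi
    rcases mem_marks_cons.mp hi with ⟨rfl, rfl⟩ | ⟨j, hj, rfl⟩
    · exact zero_mem_peaks_iff.mpr ⟨_, rfl⟩
    · rw [expand_cons, ← length_toDyck, add_length_mem_peaks_append]
      exact ih hj

lemma card_marks (p : List SStep) : (marks p).card = p.count .H := by
  induction p with
  | nil => rfl
  | cons s t ih =>
    cases s <;> simp [marks, hlen, ih,
      Finset.card_image_of_injective _ (add_left_injective _)]

lemma eq_of_toDyck_append_eq {s s' : SStep} {l l' : List SStep}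
    (he : s.toDyck ++ l = s'.toDyck ++ l') (hH : s = .H ↔ s' = .H) : s = s' := by
  cases s <;> cases s' <;> simp_all [toDyck]

lemma expand_marks_injective : Function.Injective fun p => (expand p, marks p) := by
  intro p p' h
  simp only [Prod.mk.injEq] at h
  obtain ⟨he, hm⟩ := h
  induction p generalizing p' with
  | nil => cases p' with
    | nil => rfl
    | cons s t => cases s <;> simp [toDyck] at he
  | cons s t ih => cases p' with
    | nil => cases s <;> simp [toDyck] at he
    | cons s' t' =>
      rw [expand_cons, expand_cons] at he
      obtain rfl : s = s' := eq_of_toDyck_append_eq he (by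
        rw [← zero_mem_marks_cons (t := t), hm, zero_mem_marks_cons])
      have htail : marks t = marks t' := Finset.ext fun i => by
        rw [← add_hlen_mem_marks_cons (s := s), hm, add_hlen_mem_marks_cons]
      rw [ih (List.append_cancel_left he) htail]

lemma marks_cons_eq {s : SStep} {t : List SStep} {S : Finset ℕ}
    (hfront : ∀ i < s.hlen, i ∈ S ↔ s = .H ∧ i = 0) (htail : ∀ j, j ∈ marks t ↔ j + s.hlen ∈ S) :
    marks (s :: t) = S := by
  ext i
  rcases lt_or_ge i s.hlen with hi | hi
  · rw [hfront i hi, mem_marks_cons]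
    constructor
    · rintro (h | ⟨j, -, rfl⟩)
      · exact h
      · omega
    · exact Or.inl
  · obtain ⟨j, rfl⟩ := Nat.exists_eq_add_of_le' hi
    rw [add_hlen_mem_marks_cons, htail]

lemma exists_toDyck_append {d : List SStep} (hd : .H ∉ d) (hne : d ≠ []) {S : Finset ℕ}
    (hS : S ⊆ peaks d) :
    ∃ (s : SStep) (t : List SStep), d = s.toDyck ++ t ∧ ∀ i < s.hlen, i ∈ S ↔ s = .H ∧ i = 0 := by
  by_cases h0 : 0 ∈ S
  · obtain ⟨t, rfl⟩ := zero_mem_peaks_iff.mp (hS h0)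
    refine ⟨.H, t, rfl, fun i hi => ?_⟩
    obtain rfl | rfl : i = 0 ∨ i = 1 := by simp only [hlen] at hi; omega
    · simp [h0]
    · simpa using fun h1 => one_notMem_peaks t (hS h1)
  · obtain ⟨a, t, rfl⟩ := List.exists_cons_of_ne_nil hne
    have ha : a ≠ .H := fun h => hd (h ▸ List.mem_cons_self)
    refine ⟨a, t, by cases a <;> simp_all [toDyck], fun i hi => ?_⟩
    obtain rfl : i = 0 := by cases a <;> simp_all [hlen]
    simp [h0, ha]

lemma exists_expand_eq_marks_eq (d : List SStep) (hd : .H ∉ d) (S : Finset ℕ)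
    (hS : S ⊆ peaks d) : ∃ p, expand p = d ∧ marks p = S := by
  rcases eq_or_ne d [] with rfl | hne
  · simp only [peaks, List.length_nil, Finset.range_zero, Finset.filter_empty,
      Finset.subset_empty] at hS
    exact ⟨[], rfl, hS ▸ rfl⟩
  obtain ⟨s, t, rfl, hfront⟩ := exists_toDyck_append hd hne hS
  set S' := S.preimage (· + s.hlen) (add_left_injective _).injOn
  have hS' : S' ⊆ peaks t := fun j hj => by
    rw [← add_length_mem_peaks_append (w := s.toDyck), length_toDyck]
    exact hS (by simpa [S'] using hj)
  obtain ⟨p, rfl, hp⟩ := exists_expand_eq_marks_eq t (by simp_all) S' hS'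
  exact ⟨s :: p, rfl, marks_cons_eq hfront fun j => by rw [hp, Finset.mem_preimage]⟩
termination_by d.length
decreasing_by
  subst_vars
  cases s <;> simp [toDyck]

/-- Replacing chosen peaks `ud` of a Dyck path by horizontal steps is a bijection
between Schröder paths of semilength `n` with `k` horizontal steps and pairs
(Dyck path of semilength `n`, set of `k` of its peaks). -/
theorem schroeder_dyck_peaks_bijection (n k : ℕ) :
    Nonempty
      ({p : List SStep // IsSchroeder n p ∧ p.count SStep.H = k} ≃
        {pd : List SStep × Finset ℕ //
          IsSchroeder n pd.1 ∧ pd.1.count SStep.H = 0 ∧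
          pd.2 ⊆ peaks pd.1 ∧ pd.2.card = k}) := by
  refine ⟨.ofBijective (fun p => ⟨(expand p.1, marks p.1), ?_⟩) ⟨?_, ?_⟩⟩
  · exact ⟨isSchroeder_expand_iff.mpr p.2.1, List.count_eq_zero.mpr (H_notMem_expand _),
      marks_subset_peaks _, (card_marks _).trans p.2.2⟩
  · exact fun p q h => Subtype.ext (expand_marks_injective (congrArg Subtype.val h))
  · rintro ⟨⟨d, S⟩, hd, hH, hS, rfl⟩
    obtain ⟨p, rfl, rfl⟩ := exists_expand_eq_marks_eq d (List.count_eq_zero.mp hH) S hS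
    exact ⟨⟨p, isSchroeder_expand_iff.mp hd, (card_marks p).symm⟩, rfl⟩
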